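/- In the well-specified case the two losses coincide at the truth: if Q = Q_{θ*}, the Gaussian mixture with density Σ_k α_k q_{θ*_k}, then 𝓛(θ*) = ℓ(θ*); in particular the posterior responsibilities w_k(y) = α_k q_{θ*_k}(y) / Σ_j α_j q_{θ*_j}(y) satisfy the marginal constraints ∫ w_k dQ = α_k and attain the infimum defining 𝓛(θ*). -/

import Mathlib

open MeasureTheory

/-- Gaussian density on `ℝ^d` with mean `μ` and covariance `σ² I_d`. -/
noncomputable def gaussDen (d : ℕ) (σ : ℝ) (μ y : EuclideanSpace ℝ (Fin d)) : ℝ :=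
  (2 * Real.pi * σ ^ 2) ^ (-(d : ℝ) / 2) * Real.exp (-‖y - μ‖ ^ 2 / (2 * σ ^ 2))

/-- A responsibility function: a measurable map into `[0,1]^K` whose coordinates sum to one. -/
def IsResp (K d : ℕ) (w : EuclideanSpace ℝ (Fin d) → Fin K → ℝ) : Prop :=
  (∀ k, Measurable fun y => w y k) ∧ (∀ y k, w y k ∈ Set.Icc (0 : ℝ) 1) ∧
    (∀ y, ∑ k, w y k = 1)

/-- The free energy `E_Q(w, θ)`. -/
noncomputable def freeEnergy (K d : ℕ) (σ : ℝ) (α : Fin K → ℝ)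
    (Q : Measure (EuclideanSpace ℝ (Fin d)))
    (w : EuclideanSpace ℝ (Fin d) → Fin K → ℝ)
    (θ : Fin K → EuclideanSpace ℝ (Fin d)) : ℝ :=
  ∫ y, (∑ k, w y k * (Real.log (w y k) - Real.log (α k * gaussDen d σ (θ k) y))) ∂Q

/-- The negative population log-likelihood `ℓ(θ)`. -/
noncomputable def negLogLik (K d : ℕ) (σ : ℝ) (α : Fin K → ℝ)
    (Q : Measure (EuclideanSpace ℝ (Fin d)))
    (θ : Fin K → EuclideanSpace ℝ (Fin d)) : ℝ :=
  -∫ y, Real.log (∑ k, α k * gaussDen d σ (θ k) y) ∂Q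

/-- The entropic optimal transport loss `𝓛(θ)`. -/
noncomputable def entLoss (K d : ℕ) (σ : ℝ) (α : Fin K → ℝ)
    (Q : Measure (EuclideanSpace ℝ (Fin d)))
    (θ : Fin K → EuclideanSpace ℝ (Fin d)) : ℝ :=
  sInf {r : ℝ | ∃ w, IsResp K d w ∧ (∀ k, ∫ y, w y k ∂Q = α k) ∧
    freeEnergy K d σ α Q w θ = r}

/-- The Gaussian mixture measure `Q_{θ*}` with density `Σ_k α_k q_{θ*_k}`. -/
noncomputable def mixMeasure (K d : ℕ) (σ : ℝ) (α : Fin K → ℝ)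
    (θstar : Fin K → EuclideanSpace ℝ (Fin d)) : Measure (EuclideanSpace ℝ (Fin d)) :=
  volume.withDensity fun y => ENNReal.ofReal (∑ k, α k * gaussDen d σ (θstar k) y)

/-- The posterior responsibilities `w_k(y) = α_k q_{θ*_k}(y) / Σ_j α_j q_{θ*_j}(y)`. -/
noncomputable def postResp (K d : ℕ) (σ : ℝ) (α : Fin K → ℝ)
    (θstar : Fin K → EuclideanSpace ℝ (Fin d)) :
    EuclideanSpace ℝ (Fin d) → Fin K → ℝ :=
  fun y k => α k * gaussDen d σ (θstar k) y / ∑ j, α j * gaussDen d σ (θstar j) y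

/-!
Fix `y` and write `p_k = α_k q_{θ*_k}(y)`. Gibbs' inequality gives
`∑_k w_k (log w_k - log p_k) ≥ -log ∑_k p_k` for every probability vector `w`, with equality at
the posterior `w_k = p_k / ∑_j p_j`; integrating against `Q` gives `E_Q(w, θ*) ≥ ℓ(θ*)`, with
equality at the posterior responsibilities. Since `Q` has density `∑_j p_j`, the posterior
satisfies `∫ w_k dQ = ∫ p_k = α_k`, so it is feasible and attains the infimum. All integrals are
finite because `log p_k` is quadratic in `y` and `Q` has second moments.
-/

open Real Finset

section Gibbs

variable {ι : Type*} [Fintype ι] {p w : ι → ℝ}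

lemma sub_le_mul_log_sub_log {t s : ℝ} (ht : 0 ≤ t) (hs : 0 < s) :
    t - s ≤ t * (log t - log s) := by
  rcases ht.eq_or_lt with rfl | ht
  · simpa using hs.le
  · have h := mul_le_mul_of_nonneg_left (self_sub_one_le_mul_log (div_nonneg ht.le hs.le)) hs.le
    rw [log_div ht.ne' hs.ne', mul_sub, mul_one, ← mul_assoc, mul_div_cancel₀ _ hs.ne'] at h
    exact h

lemma abs_mul_log_le_one {t : ℝ} (h0 : 0 ≤ t) (h1 : t ≤ 1) : |t * log t| ≤ 1 := by
  have h := negMulLog_le_one_sub_self h0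
  rw [negMulLog, neg_mul] at h
  rw [abs_of_nonpos (mul_log_nonpos h0 h1)]
  linarith

lemma div_sum_mem_Icc (hp : ∀ k, 0 ≤ p k) (k : ι) : p k / ∑ j, p j ∈ Set.Icc (0 : ℝ) 1 :=
  ⟨div_nonneg (hp k) (sum_nonneg fun j _ => hp j),
    div_le_one_of_le₀ (single_le_sum (fun j _ => hp j) (mem_univ k)) (sum_nonneg fun j _ => hp j)⟩

lemma neg_log_sum_le_sum_mul_log_sub (hp : ∀ k, 0 < p k) (hw : ∀ k, 0 ≤ w k)
    (hw1 : ∑ k, w k = 1) : -log (∑ k, p k) ≤ ∑ k, w k * (log (w k) - log (p k)) := by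
  set S := ∑ k, p k
  have hS : 0 < S :=
    sum_pos (fun k _ => hp k) (nonempty_of_sum_ne_zero (by rw [hw1]; exact one_ne_zero))
  have gibbs : 0 ≤ ∑ k, w k * (log (w k) - log (p k / S)) :=
    calc 0 = ∑ k, (w k - p k / S) := by
          rw [sum_sub_distrib, hw1, ← sum_div, div_self hS.ne', sub_self]
      _ ≤ _ := sum_le_sum fun k _ => sub_le_mul_log_sub_log (hw k) (div_pos (hp k) hS)
  have hshift : ∑ k, w k * (log (w k) - log (p k / S))
      = ∑ k, w k * (log (w k) - log (p k)) + log S :=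
    calc _ = ∑ k, (w k * (log (w k) - log (p k)) + w k * log S) :=
          sum_congr rfl fun k _ => by rw [log_div (hp k).ne' hS.ne']; ring
      _ = _ := by rw [sum_add_distrib, ← sum_mul, hw1, one_mul]
  linarith

lemma sum_div_mul_log_div_sub_log [Nonempty ι] (hp : ∀ k, 0 < p k) :
    ∑ k, (p k / ∑ j, p j) * (log (p k / ∑ j, p j) - log (p k)) = -log (∑ k, p k) := by
  have hS : 0 < ∑ k, p k := sum_pos (fun k _ => hp k) univ_nonempty
  calc _ = ∑ k, (p k / ∑ j, p j) * -log (∑ k, p k) :=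
        sum_congr rfl fun k _ => by rw [log_div (hp k).ne' hS.ne']; ring
    _ = _ := by rw [← sum_mul, ← sum_div, div_self hS.ne', one_mul]

lemma abs_sum_mul_log_sub_le (hw : ∀ k, w k ∈ Set.Icc (0 : ℝ) 1) :
    |∑ k, w k * (log (w k) - log (p k))| ≤ Fintype.card ι + ∑ k, |log (p k)| := by
  calc |∑ k, w k * (log (w k) - log (p k))|
      ≤ ∑ k, |w k * log (w k) - w k * log (p k)| := by
        simpa only [mul_sub] using abs_sum_le_sum_abs _ _
    _ ≤ ∑ k, (1 + |log (p k)|) := sum_le_sum fun k _ => by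
        refine (abs_sub _ _).trans (add_le_add (abs_mul_log_le_one (hw k).1 (hw k).2) ?_)
        rw [abs_mul, abs_of_nonneg (hw k).1]
        exact mul_le_of_le_one_left (abs_nonneg _) (hw k).2
    _ = Fintype.card ι + ∑ k, |log (p k)| := by simp [sum_add_distrib]

end Gibbs

section FreeEnergyBound

variable {X ι : Type*} [MeasurableSpace X] [Fintype ι] {Q : Measure X} [IsFiniteMeasure Q]
  {p : ι → X → ℝ} {w : X → ι → ℝ}

lemma integrable_sum_mul_log_sub (hw : ∀ k, Measurable fun x => w x k)
    (hw01 : ∀ x k, w x k ∈ Set.Icc (0 : ℝ) 1) (hlog : ∀ k, Integrable (fun x => log (p k x)) Q) :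
    Integrable (fun x => ∑ k, w x k * (log (w x k) - log (p k x))) Q := by
  have hdom : Integrable (fun x => (Fintype.card ι : ℝ) + ∑ k, |log (p k x)|) Q :=
    (integrable_const _).add (integrable_finsetSum _ fun k _ => (hlog k).abs)
  refine hdom.mono' ?_ (ae_of_all _ fun x => ?_)
  · exact aestronglyMeasurable_fun_sum _ fun k _ =>
      (hw k).aestronglyMeasurable.mul ((hw k).log.aestronglyMeasurable.sub (hlog k).1)
  · simpa only [Real.norm_eq_abs] using abs_sum_mul_log_sub_le (hw01 x)

lemma integrable_log_sum [Nonempty ι] (hp : ∀ k x, 0 < p k x) (hpm : ∀ k, Measurable (p k))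
    (hlog : ∀ k, Integrable (fun x => log (p k x)) Q) :
    Integrable (fun x => log (∑ k, p k x)) Q := by
  have hpost := integrable_sum_mul_log_sub (w := fun x k => p k x / ∑ j, p j x)
    (fun k => (hpm k).div (Finset.measurable_sum _ fun j _ => hpm j))
    (fun x => div_sum_mem_Icc fun k => (hp k x).le) hlog
  refine hpost.neg.congr (ae_of_all _ fun x => ?_)
  simp only [Pi.neg_apply, sum_div_mul_log_div_sub_log (hp · x), neg_neg]

lemma integral_neg_log_sum_le [Nonempty ι] (hp : ∀ k x, 0 < p k x) (hpm : ∀ k, Measurable (p k))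
    (hlog : ∀ k, Integrable (fun x => log (p k x)) Q) (hw : ∀ k, Measurable fun x => w x k)
    (hw01 : ∀ x k, w x k ∈ Set.Icc (0 : ℝ) 1) (hw1 : ∀ x, ∑ k, w x k = 1) :
    ∫ x, -log (∑ k, p k x) ∂Q ≤ ∫ x, ∑ k, w x k * (log (w x k) - log (p k x)) ∂Q :=
  integral_mono (integrable_log_sum hp hpm hlog).neg (integrable_sum_mul_log_sub hw hw01 hlog)
    fun x => neg_log_sum_le_sum_mul_log_sub (hp · x) (fun k => (hw01 x k).1) (hw1 x)

end FreeEnergyBound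

section WithDensityOfReal

variable {X : Type*} [MeasurableSpace X] {μ : Measure X} {f : X → ℝ}

lemma integral_withDensity_ofReal (hf : Measurable f) (hf0 : ∀ x, 0 ≤ f x) (g : X → ℝ) :
    ∫ x, g x ∂μ.withDensity (fun x => ENNReal.ofReal (f x)) = ∫ x, f x * g x ∂μ := by
  rw [integral_withDensity_eq_integral_toReal_smul hf.ennreal_ofReal
    (ae_of_all _ fun _ => ENNReal.ofReal_lt_top)]
  simp only [ENNReal.toReal_ofReal (hf0 _), smul_eq_mul]

lemma integrable_withDensity_ofReal_iff (hf : Measurable f) (hf0 : ∀ x, 0 ≤ f x) {g : X → ℝ} :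
    Integrable g (μ.withDensity fun x => ENNReal.ofReal (f x)) ↔
      Integrable (fun x => f x * g x) μ := by
  rw [integrable_withDensity_iff_integrable_smul' hf.ennreal_ofReal
    (ae_of_all _ fun _ => ENNReal.ofReal_lt_top)]
  simp only [ENNReal.toReal_ofReal (hf0 _), smul_eq_mul]

end WithDensityOfReal

section GaussianIntegrals

variable {V : Type*} [NormedAddCommGroup V] [InnerProductSpace ℝ V] [FiniteDimensional ℝ V]
  [MeasurableSpace V] [BorelSpace V] {b : ℝ}

lemma integrable_exp_neg_mul_sq_norm (hb : 0 < b) :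
    Integrable fun v : V => exp (-b * ‖v‖ ^ 2) := by
  refine (GaussianFourier.integrable_cexp_neg_mul_sq_norm_add (V := V) (b := (b : ℂ))
    (by simpa using hb) 0 0).norm.congr (ae_of_all _ fun v => ?_)
  dsimp only
  rw [Complex.norm_exp]
  norm_num [← Complex.ofReal_pow]

lemma integrable_sq_norm_mul_exp_neg_mul_sq_norm (hb : 0 < b) :
    Integrable fun v : V => ‖v‖ ^ 2 * exp (-b * ‖v‖ ^ 2) := by
  -- `t ≤ (2 / b) exp (b t / 2)` trades the polynomial factor for half of the Gaussian decay
  have key (t : ℝ) : t * exp (-b * t) ≤ 2 / b * exp (-(b / 2) * t) := by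
    have ht : t ≤ 2 / b * exp (b / 2 * t) := by
      rw [div_mul_eq_mul_div, le_div_iff₀ hb]
      nlinarith [add_one_le_exp (b / 2 * t)]
    calc t * exp (-b * t) ≤ 2 / b * exp (b / 2 * t) * exp (-b * t) :=
          mul_le_mul_of_nonneg_right ht (exp_pos _).le
      _ = 2 / b * exp (-(b / 2) * t) := by rw [mul_assoc, ← exp_add]; ring_nf
  refine ((integrable_exp_neg_mul_sq_norm (V := V) (half_pos hb)).const_mul (2 / b)).mono'
    (by fun_prop) (ae_of_all _ fun v => ?_)
  rw [Real.norm_eq_abs, abs_of_nonneg (by positivity)]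
  exact key _

end GaussianIntegrals

section GaussDen

variable {d : ℕ} {σ : ℝ}

lemma gaussDen_eq_mul_exp (μ y : EuclideanSpace ℝ (Fin d)) :
    gaussDen d σ μ y =
      (2 * π * σ ^ 2) ^ (-(d : ℝ) / 2) * exp (-(2 * σ ^ 2)⁻¹ * ‖y - μ‖ ^ 2) := by
  rw [gaussDen]
  congr 2
  ring

lemma gaussDen_nonneg (μ y : EuclideanSpace ℝ (Fin d)) : 0 ≤ gaussDen d σ μ y := by
  unfold gaussDen
  positivity

lemma gaussDen_pos (hσ : σ ≠ 0) (μ y : EuclideanSpace ℝ (Fin d)) : 0 < gaussDen d σ μ y := by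
  unfold gaussDen
  positivity

@[fun_prop]
lemma continuous_gaussDen (μ : EuclideanSpace ℝ (Fin d)) : Continuous (gaussDen d σ μ) := by
  unfold gaussDen
  fun_prop

lemma log_gaussDen (hσ : σ ≠ 0) (μ y : EuclideanSpace ℝ (Fin d)) :
    log (gaussDen d σ μ y) = -(d / 2) * log (2 * π * σ ^ 2) - (2 * σ ^ 2)⁻¹ * ‖y - μ‖ ^ 2 := by
  rw [gaussDen_eq_mul_exp, log_mul (by positivity) (exp_pos _).ne', log_rpow (by positivity),
    log_exp]
  ring

lemma integrable_gaussDen (hσ : σ ≠ 0) (μ : EuclideanSpace ℝ (Fin d)) :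
    Integrable (gaussDen d σ μ) := by
  simp_rw [funext (gaussDen_eq_mul_exp (σ := σ) μ)]
  exact ((integrable_exp_neg_mul_sq_norm (by positivity)).comp_sub_right μ).const_mul _

lemma integral_gaussDen (hσ : σ ≠ 0) (μ : EuclideanSpace ℝ (Fin d)) :
    ∫ y, gaussDen d σ μ y = 1 := by
  have hb : 0 < (2 * σ ^ 2)⁻¹ := by positivity
  simp_rw [gaussDen_eq_mul_exp, integral_const_mul]
  rw [integral_sub_right_eq_self (fun y => exp (-(2 * σ ^ 2)⁻¹ * ‖y‖ ^ 2)) μ,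
    GaussianFourier.integral_rexp_neg_mul_sq_norm hb, finrank_euclideanSpace_fin, div_inv_eq_mul,
    show π * (2 * σ ^ 2) = 2 * π * σ ^ 2 by ring, ← rpow_add (by positivity)]
  rw [neg_div, neg_add_cancel, rpow_zero]

lemma integrable_gaussDen_mul_sq_norm_sub (hσ : σ ≠ 0) (c μ : EuclideanSpace ℝ (Fin d)) :
    Integrable fun y => gaussDen d σ μ y * ‖y - c‖ ^ 2 := by
  have hdom : Integrable fun y =>
      2 * (2 * π * σ ^ 2) ^ (-(d : ℝ) / 2) *
          (‖y - μ‖ ^ 2 * exp (-(2 * σ ^ 2)⁻¹ * ‖y - μ‖ ^ 2)) +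
        2 * ‖μ - c‖ ^ 2 * gaussDen d σ μ y :=
    (((integrable_sq_norm_mul_exp_neg_mul_sq_norm (by positivity)).comp_sub_right μ).const_mul
      _).add ((integrable_gaussDen hσ μ).const_mul _)
  refine hdom.mono' (by fun_prop) (ae_of_all _ fun y => ?_)
  have hq := (gaussDen_pos hσ μ y).le
  have htri : ‖y - c‖ ^ 2 ≤ 2 * (‖y - μ‖ ^ 2 + ‖μ - c‖ ^ 2) :=
    (pow_le_pow_left₀ (norm_nonneg _) (norm_sub_le_norm_sub_add_norm_sub y μ c) 2).trans add_sq_le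
  rw [Real.norm_eq_abs, abs_of_nonneg (by positivity)]
  calc gaussDen d σ μ y * ‖y - c‖ ^ 2 ≤ gaussDen d σ μ y * (2 * (‖y - μ‖ ^ 2 + ‖μ - c‖ ^ 2)) :=
        mul_le_mul_of_nonneg_left htri hq
    _ = _ := by rw [gaussDen_eq_mul_exp]; ring

end GaussDen

section MixMeasure

variable {K d : ℕ} {σ : ℝ} {α : Fin K → ℝ} {θ : Fin K → EuclideanSpace ℝ (Fin d)}

lemma integral_mixMeasure (hα : ∀ k, 0 ≤ α k) (g : EuclideanSpace ℝ (Fin d) → ℝ) :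
    ∫ y, g y ∂mixMeasure K d σ α θ = ∫ y, (∑ k, α k * gaussDen d σ (θ k) y) * g y :=
  integral_withDensity_ofReal (by fun_prop)
    (fun y => sum_nonneg fun k _ => mul_nonneg (hα k) (gaussDen_nonneg ..)) g

lemma integrable_mixMeasure_iff (hα : ∀ k, 0 ≤ α k) {g : EuclideanSpace ℝ (Fin d) → ℝ} :
    Integrable g (mixMeasure K d σ α θ) ↔
      Integrable fun y => (∑ k, α k * gaussDen d σ (θ k) y) * g y :=
  integrable_withDensity_ofReal_iff (by fun_prop)
    (fun y => sum_nonneg fun k _ => mul_nonneg (hα k) (gaussDen_nonneg ..))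

lemma isFiniteMeasure_mixMeasure (hσ : σ ≠ 0) : IsFiniteMeasure (mixMeasure K d σ α θ) :=
  isFiniteMeasure_withDensity_ofReal
    (integrable_finsetSum _ fun k _ => (integrable_gaussDen hσ (θ k)).const_mul (α k)).2

lemma integrable_sq_norm_sub_mixMeasure (hσ : σ ≠ 0) (hα : ∀ k, 0 ≤ α k)
    (c : EuclideanSpace ℝ (Fin d)) :
    Integrable (fun y => ‖y - c‖ ^ 2) (mixMeasure K d σ α θ) := by
  rw [integrable_mixMeasure_iff hα]
  simp_rw [sum_mul, mul_assoc]
  exact integrable_finsetSum _ fun k _ =>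
    (integrable_gaussDen_mul_sq_norm_sub hσ c (θ k)).const_mul (α k)

lemma integrable_log_mul_gaussDen_mixMeasure (hσ : σ ≠ 0) (hα : ∀ k, 0 ≤ α k) {a : ℝ}
    (ha : 0 < a) (μ : EuclideanSpace ℝ (Fin d)) :
    Integrable (fun y => log (a * gaussDen d σ μ y)) (mixMeasure K d σ α θ) := by
  have := isFiniteMeasure_mixMeasure (α := α) (θ := θ) hσ
  refine ((integrable_const (log a - d / 2 * log (2 * π * σ ^ 2))).sub
    ((integrable_sq_norm_sub_mixMeasure hσ hα μ).const_mul (2 * σ ^ 2)⁻¹)).congr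
    (ae_of_all _ fun y => ?_)
  simp only [Pi.sub_apply, log_mul ha.ne' (gaussDen_pos hσ μ y).ne', log_gaussDen hσ]
  ring

lemma integral_postResp_mixMeasure (hσ : σ ≠ 0) (hα : ∀ k, 0 ≤ α k) (k : Fin K) :
    ∫ y, postResp K d σ α θ y k ∂mixMeasure K d σ α θ = α k := by
  have hp (y : EuclideanSpace ℝ (Fin d)) (j : Fin K) : 0 ≤ α j * gaussDen d σ (θ j) y :=
    mul_nonneg (hα j) (gaussDen_nonneg ..)
  rw [integral_mixMeasure hα]
  -- `S * (p_k / S) = p_k` also where the density `S` vanishes, since `0 ≤ p_k ≤ S`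
  calc _ = ∫ y, α k * gaussDen d σ (θ k) y :=
        integral_congr_ae (ae_of_all _ fun y => mul_div_cancel_of_imp' fun hS =>
          le_antisymm (hS ▸ single_le_sum (fun j _ => hp y j) (mem_univ k)) (hp y k))
    _ = α k := by rw [integral_const_mul, integral_gaussDen hσ, mul_one]

variable [NeZero K]

lemma isResp_postResp (hσ : σ ≠ 0) (hα : ∀ k, 0 < α k) : IsResp K d (postResp K d σ α θ) := by
  have hp (y : EuclideanSpace ℝ (Fin d)) (k : Fin K) : 0 < α k * gaussDen d σ (θ k) y :=
    mul_pos (hα k) (gaussDen_pos hσ _ _)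
  refine ⟨fun k => by unfold postResp; fun_prop, fun y => div_sum_mem_Icc fun k => (hp y k).le,
    fun y => ?_⟩
  simp only [postResp]
  rw [← sum_div, div_self (sum_pos (fun k _ => hp y k) univ_nonempty).ne']

lemma freeEnergy_postResp (hσ : σ ≠ 0) (hα : ∀ k, 0 < α k)
    (Q : Measure (EuclideanSpace ℝ (Fin d))) :
    freeEnergy K d σ α Q (postResp K d σ α θ) θ = negLogLik K d σ α Q θ := by
  rw [freeEnergy, negLogLik, ← integral_neg]
  congr with y
  exact sum_div_mul_log_div_sub_log fun k => mul_pos (hα k) (gaussDen_pos hσ _ _)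

lemma negLogLik_le_freeEnergy_mixMeasure (hσ : σ ≠ 0) (hα : ∀ k, 0 < α k)
    {w : EuclideanSpace ℝ (Fin d) → Fin K → ℝ} (hw : IsResp K d w) :
    negLogLik K d σ α (mixMeasure K d σ α θ) θ ≤ freeEnergy K d σ α (mixMeasure K d σ α θ) w θ := by
  have := isFiniteMeasure_mixMeasure (α := α) (θ := θ) hσ
  rw [negLogLik, ← integral_neg]
  exact integral_neg_log_sum_le (fun k y => mul_pos (hα k) (gaussDen_pos hσ _ _))
    (fun k => by fun_prop)
    (fun k => integrable_log_mul_gaussDen_mixMeasure hσ (fun j => (hα j).le) (hα k) (θ k))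
    hw.1 hw.2.1 hw.2.2

end MixMeasure

theorem entLoss_eq_negLogLik_wellSpecified_general
    (K d : ℕ) (hK : 1 ≤ K) (σ : ℝ) (hσ : 0 < σ)
    (α : Fin K → ℝ) (hα : ∀ k, α k ∈ Set.Ioo (0 : ℝ) 1)
    (θstar : Fin K → EuclideanSpace ℝ (Fin d)) :
    (∀ k, ∫ y, postResp K d σ α θstar y k ∂(mixMeasure K d σ α θstar) = α k) ∧
    freeEnergy K d σ α (mixMeasure K d σ α θstar) (postResp K d σ α θstar) θstar
      = entLoss K d σ α (mixMeasure K d σ α θstar) θstar ∧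
    entLoss K d σ α (mixMeasure K d σ α θstar) θstar
      = negLogLik K d σ α (mixMeasure K d σ α θstar) θstar := by
  have : NeZero K := ⟨by omega⟩
  have hαpos (k : Fin K) : 0 < α k := (hα k).1
  have hmarg := integral_postResp_mixMeasure (θ := θstar) hσ.ne' fun k => (hαpos k).le
  have hfe := freeEnergy_postResp (θ := θstar) hσ.ne' hαpos (mixMeasure K d σ α θstar)
  have hEnt : entLoss K d σ α (mixMeasure K d σ α θstar) θstar
      = negLogLik K d σ α (mixMeasure K d σ α θstar) θstar := by
    refine IsLeast.csInf_eq
      ⟨⟨postResp K d σ α θstar, isResp_postResp hσ.ne' hαpos, hmarg, hfe⟩, ?_⟩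
    rintro _ ⟨w, hw, -, rfl⟩
    exact negLogLik_le_freeEnergy_mixMeasure hσ.ne' hαpos hw
  exact ⟨hmarg, hfe.trans hEnt.symm, hEnt⟩

/-- in the well-specified case, `𝓛(θ*) = ℓ(θ*)`, and the posterior
responsibilities satisfy the marginal constraints and attain the infimum defining `𝓛(θ*)`. -/
theorem entLoss_eq_negLogLik_wellSpecified
    (K d : ℕ) (hK : 1 ≤ K) (hd : 1 ≤ d) (σ : ℝ) (hσ : 0 < σ)
    (α : Fin K → ℝ) (hα : ∀ k, α k ∈ Set.Ioo (0 : ℝ) 1) (hαsum : ∑ k, α k = 1)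
    (θstar : Fin K → EuclideanSpace ℝ (Fin d)) :
    (∀ k, ∫ y, postResp K d σ α θstar y k ∂(mixMeasure K d σ α θstar) = α k) ∧
    freeEnergy K d σ α (mixMeasure K d σ α θstar) (postResp K d σ α θstar) θstar
      = entLoss K d σ α (mixMeasure K d σ α θstar) θstar ∧
    entLoss K d σ α (mixMeasure K d σ α θstar) θstar
      = negLogLik K d σ α (mixMeasure K d σ α θstar) θstar :=
  entLoss_eq_negLogLik_wellSpecified_general K d hK σ hσ α hα θstar
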